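/- For every k ≥ 1, if a word s of even length over a k-letter alphabet satisfies property (*), then the word obtained from s by appending one arbitrary letter of the alphabet still satisfies property (*). Consequently, n(k) is odd for every k ≥ 1. -/

import Mathlib

/-- `friedmanBlock s i` is the block `s_i s_{i+1} … s_{2i}` of the word `s`
(1-based indices); it has length `i + 1` when `2*i ≤ s.length`. -/
def friedmanBlock {α : Type} (s : List α) (i : ℕ) : List α :=
  (s.drop (i - 1)).take (i + 1)

/-- Friedman's property (*): there are no indices `1 ≤ i < j ≤ n/2` such that
`s^(i)` is a (scattered) subword of `s^(j)`.  Note `j ≤ n/2 ↔ 2*j ≤ n`. -/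
def SatisfiesStar {α : Type} (s : List α) : Prop :=
  ∀ i j : ℕ, 1 ≤ i → i < j → 2 * j ≤ s.length →
    ¬ (friedmanBlock s i).Sublist (friedmanBlock s j)

/-- `friedmanN k` = n(k), the length of a longest word over a `k`-letter
alphabet satisfying (*). -/
noncomputable def friedmanN (k : ℕ) : ℕ :=
  sSup {n : ℕ | ∃ s : List (Fin k), s.length = n ∧ SatisfiesStar s}

/-!
Property (*) only looks at the prefix of length `2 ⌊n/2⌋`, so it is inherited by prefixes and,
for a word of even length, by every one-letter extension. Hence a longest (*)-word cannot have
even length. That a longest one exists is Friedman's theorem: by Kőnig's lemma, arbitrarily long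
(*)-words over a finite alphabet would give an infinite word all of whose prefixes satisfy (*),
and its blocks `s^(1), s^(2), …` would be a bad sequence for the subword order, contradicting
Higman's lemma.
-/

/-- **Higman's lemma** for the subword order over a finite alphabet. -/
theorem List.exists_lt_sublist_of_finite {α : Type*} [Finite α] (f : ℕ → List α) :
    ∃ m n, m < n ∧ (f m).Sublist (f n) := by
  have hpwo := (Set.finite_univ (α := α)).partiallyWellOrderedOn (r := (· = ·))
  obtain ⟨m, n, hmn, hsub⟩ :=
    hpwo.partiallyWellOrderedOn_sublistForall₂ (· = ·) (fun n => ⟨f n, fun x _ => trivial⟩)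
  obtain ⟨l, hl, hls⟩ := List.sublistForall₂_iff.mp hsub
  rw [List.forall₂_eq_eq_eq] at hl
  subst hl
  exact ⟨m, n, hmn, hls⟩

/-- **Kőnig's lemma** for a prefix-closed set of words over a finite alphabet. -/
theorem List.exists_prefix_chain_of_forall_exists_length_le {α : Type*} [Finite α]
    {P : List α → Prop} (hP : ∀ {s t : List α}, s <+: t → P t → P s)
    (hlong : ∀ n, ∃ s, P s ∧ n ≤ s.length) :
    ∃ u : ℕ → List α, (∀ n, P (u n)) ∧ (∀ n, (u n).length = n) ∧
      ∀ m n, m ≤ n → u m <+: u n := by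
  let T (i : ℕ) := {v : Fin i → α // P (List.ofFn v)}
  have instNonempty : ∀ i, Nonempty (T i) := fun i => by
    obtain ⟨s, hs, hi⟩ := hlong i
    exact ⟨⟨Fin.take i hi s.get, by rw [Fin.ofFn_take_get]; exact hP (s.take_prefix i) hs⟩⟩
  let π {i j : ℕ} (hij : i ≤ j) (v : T j) : T i :=
    ⟨Fin.take i hij v.1, by
      rw [Fin.ofFn_take_eq_take_ofFn]; exact hP (List.take_prefix _ _) v.2⟩
  obtain ⟨f, hf⟩ := exists_seq_forall_proj_of_forall_finite (α := T) π
    (fun _ v => Subtype.ext (Fin.take_eq_self v.1))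
    (fun _ _ _ hij hjk v => Subtype.ext (Fin.take_take hij hjk v.1))
    (fun _ _ => Set.toFinite _)
  refine ⟨fun n => List.ofFn (f n).1, fun n => (f n).2, fun n => List.length_ofFn,
    fun m n hmn => ?_⟩
  change List.ofFn (f m).1 <+: List.ofFn (f n).1
  rw [← hf hmn]
  simp only [π, Fin.ofFn_take_eq_take_ofFn]
  exact List.take_prefix _ _

theorem friedmanBlock_append {α : Type} {s : List α} {j : ℕ} (hj : 1 ≤ j)
    (hlen : 2 * j ≤ s.length) (r : List α) :
    friedmanBlock (s ++ r) j = friedmanBlock s j := by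
  unfold friedmanBlock
  rw [List.drop_append_of_le_length (by omega),
    List.take_append_of_le_length (by rw [List.length_drop]; omega)]

theorem friedmanBlock_of_prefix {α : Type} {s t : List α} {j : ℕ} (hj : 1 ≤ j)
    (hst : s <+: t) (hlen : 2 * j ≤ s.length) :
    friedmanBlock t j = friedmanBlock s j := by
  obtain ⟨r, rfl⟩ := hst
  exact friedmanBlock_append hj hlen r

namespace SatisfiesStar

variable {α : Type}

theorem of_prefix {s t : List α} (ht : SatisfiesStar t) (hst : s <+: t) : SatisfiesStar s := by
  intro i j hi hij hj
  rw [← friedmanBlock_of_prefix hi hst (by omega), ← friedmanBlock_of_prefix (by omega) hst hj]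
  exact ht i j hi hij (hj.trans hst.length_le)

theorem append_singleton {s : List α} (hev : Even s.length) (hs : SatisfiesStar s) (a : α) :
    SatisfiesStar (s ++ [a]) := by
  intro i j hi hij hj
  have hj' : 2 * j ≤ s.length := by
    obtain ⟨m, hm⟩ := hev
    simp only [List.length_append, List.length_singleton] at hj
    omega
  rw [friedmanBlock_append hi (by omega), friedmanBlock_append (by omega) hj']
  exact hs i j hi hij hj'

end SatisfiesStar

/-- **Friedman's theorem**. -/
theorem bddAbove_length_satisfiesStar (α : Type) [Finite α] :
    BddAbove {n : ℕ | ∃ s : List α, s.length = n ∧ SatisfiesStar s} := by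
  by_contra hunbdd
  have hlong : ∀ n, ∃ s : List α, SatisfiesStar s ∧ n ≤ s.length := fun n => by
    obtain ⟨_, ⟨s, rfl, hs⟩, hn⟩ := not_bddAbove_iff.mp hunbdd n
    exact ⟨s, hs, hn.le⟩
  obtain ⟨u, hstar, hlen, hpre⟩ := List.exists_prefix_chain_of_forall_exists_length_le
    (fun hst ht => SatisfiesStar.of_prefix ht hst) hlong
  obtain ⟨m, n, hmn, hsub⟩ :=
    List.exists_lt_sublist_of_finite fun n => friedmanBlock (u (2 * (n + 1))) (n + 1)
  rw [← friedmanBlock_of_prefix (by omega) (hpre _ (2 * (n + 1)) (by omega)) (hlen _).ge] at hsub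
  exact hstar _ (m + 1) (n + 1) (by omega) (by omega) (hlen _).ge hsub

theorem exists_length_eq_friedmanN (k : ℕ) :
    ∃ s : List (Fin k), s.length = friedmanN k ∧ SatisfiesStar s := by
  refine Nat.sSup_mem ?_ (bddAbove_length_satisfiesStar (Fin k))
  exact ⟨0, [], rfl, fun _ _ _ _ hj => by simp only [List.length_nil] at hj; omega⟩

theorem length_le_friedmanN {k : ℕ} {s : List (Fin k)} (hs : SatisfiesStar s) :
    s.length ≤ friedmanN k :=
  le_csSup (bddAbove_length_satisfiesStar (Fin k)) ⟨s, rfl, hs⟩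

/-- Appending any letter to an even-length word satisfying (*) preserves (*);
consequently n(k) is odd for every `k ≥ 1`. -/
theorem friedman_n_odd :
    (∀ k : ℕ, 1 ≤ k → ∀ s : List (Fin k), Even s.length → SatisfiesStar s →
      ∀ a : Fin k, SatisfiesStar (s ++ [a])) ∧
    (∀ k : ℕ, 1 ≤ k → Odd (friedmanN k)) := by
  refine ⟨fun k _ s hev hs a => hs.append_singleton hev a, fun k hk => ?_⟩
  obtain ⟨s, hlen, hs⟩ := exists_length_eq_friedmanN k
  rw [← Nat.not_even_iff_odd]
  intro hev
  have hlonger := length_le_friedmanN (hs.append_singleton (hlen ▸ hev) ⟨0, hk⟩)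
  simp only [List.length_append, List.length_singleton, hlen] at hlonger
  omega
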